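/- Suppose every second-order partial derivative of the Walker metric functions A, B, C involving only the variables v and V is a constant function, i.e. ∂_v^i ∂_V^j F is constant for each F ∈ {A, B, C} and all i + j = 2. Let ξ be any one of the eight spin coefficient functions σ = −B_{,v}, τ = (1/2) C_{,v}, κ' = −A_{,V}, ρ' = −(1/2) C_{,V}, ε' = (1/4) C_{,V} − (1/2) A_{,v}, ε̃' = −(1/4) C_{,V} − (1/2) A_{,v}, α̃ = −(1/2) B_{,V} − (1/4) C_{,v}, α' = (1/2) B_{,V} − (1/4) C_{,v}. Then for every n ≥ 1 and every composition (in any order) of n − 1 operators taken from {∂_v, ∂_V} and n − 1 operators taken from {D', δ}, the result of applying the composition to ξ is an ℝ-linear combination with constant coefficients of the eight functions σ, τ, κ', ρ', ε', ε̃', α̃, α', where D' = ∂_u − A ∂_v − (1/2) C ∂_V and δ = −∂_U + B ∂_V + (1/2) C ∂_v. -/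

import Mathlib

noncomputable section

/-- Real-valued functions on ℝ⁴, with coordinates `x 0 = u`, `x 1 = v`, `x 2 = U`, `x 3 = V`. -/
abbrev Fn : Type := (Fin 4 → ℝ) → ℝ

/-- Partial derivative in the `i`-th coordinate direction. -/
def pd (i : Fin 4) (f : Fn) : Fn :=
  fun x => lineDeriv ℝ f x (Pi.single i 1)

/-- ∂/∂u -/ def pu : Fn → Fn := pd 0
/-- ∂/∂v -/ def pv : Fn → Fn := pd 1
/-- ∂/∂U -/ def pU : Fn → Fn := pd 2
/-- ∂/∂V -/ def pV : Fn → Fn := pd 3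

/-- The frame directional derivative D' = ∂_u − A ∂_v − (1/2) C ∂_V. -/
def Dp (A C : Fn) (f : Fn) : Fn :=
  fun x => pu f x - A x * pv f x - (1/2) * C x * pV f x

/-- The frame directional derivative δ = −∂_U + B ∂_V + (1/2) C ∂_v. -/
def delta (B C : Fn) (f : Fn) : Fn :=
  fun x => -(pU f x) + B x * pV f x + (1/2) * C x * pv f x

/-- σ = −B_{,v} -/
def sigma (B : Fn) : Fn := fun x => -(pv B x)
/-- τ = (1/2) C_{,v} -/
def tau (C : Fn) : Fn := fun x => (1/2) * pv C x
/-- κ' = −A_{,V} -/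
def kappa' (A : Fn) : Fn := fun x => -(pV A x)
/-- ρ' = −(1/2) C_{,V} -/
def rho' (C : Fn) : Fn := fun x => -(1/2) * pV C x
/-- ε' = (1/4) C_{,V} − (1/2) A_{,v} -/
def eps' (A C : Fn) : Fn := fun x => (1/4) * pV C x - (1/2) * pv A x
/-- ε̃' = −(1/4) C_{,V} − (1/2) A_{,v} -/
def teps' (A C : Fn) : Fn := fun x => -(1/4) * pV C x - (1/2) * pv A x
/-- α̃ = −(1/2) B_{,V} − (1/4) C_{,v} -/
def talpha (B C : Fn) : Fn := fun x => -(1/2) * pV B x - (1/4) * pv C x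
/-- α' = (1/2) B_{,V} − (1/4) C_{,v} -/
def alpha' (B C : Fn) : Fn := fun x => (1/2) * pV B x - (1/4) * pv C x

/-- Interpretation of operator tokens: `0 ↦ ∂_v`, `1 ↦ ∂_V`, `2 ↦ D'`, `3 ↦ δ`. -/
def opOf (A B C : Fn) : Fin 4 → (Fn → Fn) := ![pv, pV, Dp A C, delta B C]

/-- Apply a list of operator tokens (composition, leftmost applied last). -/
def applyOps (A B C : Fn) (L : List (Fin 4)) (f : Fn) : Fn :=
  L.foldr (fun t g => opOf A B C t g) f

-- abbreviation for smoothness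
abbrev Sm (f : Fn) : Prop := ContDiff ℝ (⊤ : ℕ∞) f

lemma pd_eq {f : Fn} (hf : Sm f) (i : Fin 4) :
    pd i f = fun x => fderiv ℝ f x (Pi.single i 1) := by
  funext x
  exact ((hf.differentiable (by simp)) x).lineDeriv_eq_fderiv

lemma Sm.pd {f : Fn} (hf : Sm f) (i : Fin 4) : Sm (pd i f) := by
  rw [pd_eq hf]
  exact (hf.fderiv_right (by simp)).clm_apply contDiff_const

lemma pd_const (i : Fin 4) (c : ℝ) : pd i (fun _ => c) = fun _ => 0 := by
  funext x
  have h : Sm (fun _ : Fin 4 → ℝ => c) := contDiff_const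
  rw [pd_eq h]
  simp

lemma pd_add {f g : Fn} (hf : Sm f) (hg : Sm g) (i : Fin 4) :
    pd i (fun x => f x + g x) = fun x => pd i f x + pd i g x := by
  funext x
  rw [pd_eq (hf.add hg), pd_eq hf, pd_eq hg]
  simp [fderiv_fun_add ((hf.differentiable (by simp)) x) ((hg.differentiable (by simp)) x)]

lemma pd_const_mul {f : Fn} (hf : Sm f) (c : ℝ) (i : Fin 4) :
    pd i (fun x => c * f x) = fun x => c * pd i f x := by
  funext x
  rw [pd_eq (contDiff_const.mul hf), pd_eq hf]
  simp [fderiv_const_mul ((hf.differentiable (by simp)) x) c]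

lemma pd_mul {f g : Fn} (hf : Sm f) (hg : Sm g) (i : Fin 4) :
    pd i (fun x => f x * g x) = fun x => pd i f x * g x + f x * pd i g x := by
  funext x
  rw [pd_eq (hf.mul hg), pd_eq hf, pd_eq hg]
  simp only []
  rw [show (fun x => f x * g x) = (fun y => f y * g y) from rfl,
    fderiv_fun_mul ((hf.differentiable (by simp)) x) ((hg.differentiable (by simp)) x)]
  simp
  ring

lemma pd_comm {f : Fn} (hf : Sm f) (i j : Fin 4) :
    pd i (pd j f) = pd j (pd i f) := by
  have key : ∀ k l : Fin 4, ∀ x, pd k (pd l f) x =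
      fderiv ℝ (fderiv ℝ f) x (Pi.single k 1) (Pi.single l 1) := by
    intro k l x
    rw [pd_eq (hf.pd l), pd_eq hf]
    simp only []
    rw [show (fun x => (fderiv ℝ f x) (Pi.single l 1)) = (fun y => (fderiv ℝ f y) (Pi.single l 1 : Fin 4 → ℝ)) from rfl,
      fderiv_clm_apply (((hf.fderiv_right (m := 1) (ENat.natCast_le_of_coe_top_le_withTop le_rfl (1 + 1))).differentiable (by simp)) x)
      (differentiableAt_const _)]
    simp
  funext x
  rw [key i j x, key j i x]
  exact (hf.contDiffAt.isSymmSndFDerivAt (by rw [minSmoothness_of_isRCLikeNormedField]; exact_mod_cast ENat.natCast_le_of_coe_top_le_withTop le_rfl 2)) _ _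

/-- d-type operator: `false ↦ ∂_v = pd 1`, `true ↦ ∂_V = pd 3`. -/
def dOp (b : Bool) : Fn → Fn := fun f => pd (if b then 3 else 1) f

def dApply (w : List Bool) (f : Fn) : Fn := w.foldr dOp f

lemma dApply_nil (f : Fn) : dApply [] f = f := rfl
lemma dApply_cons (b : Bool) (w : List Bool) (f : Fn) :
    dApply (b :: w) f = dOp b (dApply w f) := rfl
lemma dApply_append (w w' : List Bool) (f : Fn) :
    dApply (w ++ w') f = dApply w (dApply w' f) := List.foldr_append ..

lemma Sm.dOp {f : Fn} (hf : Sm f) (b : Bool) : Sm (dOp b f) := hf.pd _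

lemma Sm.dApply {f : Fn} (hf : Sm f) (w : List Bool) : Sm (dApply w f) := by
  induction w with
  | nil => exact hf
  | cons b w ih => exact ih.dOp b

lemma dOp_const (b : Bool) (c : ℝ) : dOp b (fun _ => c) = fun _ => 0 := pd_const _ _

lemma dApply_const_of_ne (w : List Bool) (hw : w ≠ []) (c : ℝ) :
    dApply w (fun _ => c) = fun _ => 0 := by
  induction w with
  | nil => simp at hw
  | cons b w ih =>
    rcases eq_or_ne w [] with h | h
    · subst h; rw [dApply_cons, dApply_nil, dOp_const]
    · rw [dApply_cons, ih h, dOp_const]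

lemma dOp_add {f g : Fn} (hf : Sm f) (hg : Sm g) (b : Bool) :
    dOp b (fun x => f x + g x) = fun x => dOp b f x + dOp b g x := pd_add hf hg _

lemma dApply_add {f g : Fn} (hf : Sm f) (hg : Sm g) (w : List Bool) :
    dApply w (fun x => f x + g x) = fun x => dApply w f x + dApply w g x := by
  induction w with
  | nil => rfl
  | cons b w ih =>
    rw [dApply_cons, ih, dOp_add (hf.dApply w) (hg.dApply w), dApply_cons, dApply_cons]

lemma dApply_const_mul {f : Fn} (hf : Sm f) (c : ℝ) (w : List Bool) :
    dApply w (fun x => c * f x) = fun x => c * dApply w f x := by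
  induction w with
  | nil => rfl
  | cons b w ih =>
    rw [dApply_cons, ih, dApply_cons]
    exact pd_const_mul (hf.dApply w) c _

/-- any `pd i` commutes with a word of d-derivatives (Clairaut). -/
lemma dApply_pd {f : Fn} (hf : Sm f) (i : Fin 4) (w : List Bool) :
    dApply w (pd i f) = pd i (dApply w f) := by
  induction w with
  | nil => rfl
  | cons b w ih =>
    rw [dApply_cons, ih, dApply_cons]
    exact pd_comm (hf.dApply w) _ _

/-- derivatives above a level at which all derivatives are constant vanish. -/
lemma zero_above {f : Fn} (hf : Sm f) {m : ℕ}
    (hc : ∀ w : List Bool, w.length = m → ∃ c : ℝ, ∀ x, dApply w f x = c) :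
    ∀ w : List Bool, m < w.length → dApply w f = fun _ => 0 := by
  intro w
  induction w with
  | nil => simp
  | cons b w ih =>
    intro hlen
    have hw : m ≤ w.length := Nat.lt_succ_iff.mp (by simpa using hlen)
    rcases eq_or_lt_of_le hw with h | h
    · obtain ⟨c, hc'⟩ := hc w h.symm
      rw [dApply_cons, funext hc', dOp_const]
    · rw [dApply_cons, ih h, dOp_const]

section ABC

variable (A B C : Fn)

/-- membership in the constant-coefficient span of the six first (v,V)-derivatives. -/
def V1 (g : Fn) : Prop :=
  ∃ a1 a2 a3 a4 a5 a6 : ℝ, ∀ x, g x =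
    a1 * pd 1 A x + a2 * pd 3 A x + a3 * pd 1 B x + a4 * pd 3 B x
      + a5 * pd 1 C x + a6 * pd 3 C x

variable {A B C}

lemma V1_zero : V1 A B C (fun _ => 0) :=
  ⟨0, 0, 0, 0, 0, 0, fun x => by ring⟩

lemma V1_add {g h : Fn} (hg : V1 A B C g) (hh : V1 A B C h) :
    V1 A B C (fun x => g x + h x) := by
  obtain ⟨a1, a2, a3, a4, a5, a6, hg⟩ := hg
  obtain ⟨b1, b2, b3, b4, b5, b6, hh⟩ := hh
  exact ⟨a1 + b1, a2 + b2, a3 + b3, a4 + b4, a5 + b5, a6 + b6,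
    fun x => by simp only [hg x, hh x]; ring⟩

lemma V1_const_mul {g : Fn} (c : ℝ) (hg : V1 A B C g) :
    V1 A B C (fun x => c * g x) := by
  obtain ⟨a1, a2, a3, a4, a5, a6, hg⟩ := hg
  exact ⟨c * a1, c * a2, c * a3, c * a4, c * a5, c * a6,
    fun x => by simp only [hg x]; ring⟩

lemma V1_of_const_mul_basis (c : ℝ) (i : Bool) (F : Fn)
    (hF : F = A ∨ F = B ∨ F = C) :
    V1 A B C (fun x => c * dOp i F x) := by
  have : ∀ g : Fn, g = A ∨ g = B ∨ g = C → ∀ j : Fin 4, j = 1 ∨ j = 3 →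
      V1 A B C (fun x => c * pd j g x) := by
    rintro g (rfl | rfl | rfl) j (rfl | rfl)
    · exact ⟨c, 0, 0, 0, 0, 0, fun x => by ring⟩
    · exact ⟨0, c, 0, 0, 0, 0, fun x => by ring⟩
    · exact ⟨0, 0, c, 0, 0, 0, fun x => by ring⟩
    · exact ⟨0, 0, 0, c, 0, 0, fun x => by ring⟩
    · exact ⟨0, 0, 0, 0, c, 0, fun x => by ring⟩
    · exact ⟨0, 0, 0, 0, 0, c, fun x => by ring⟩
  cases i
  · exact this F hF 1 (Or.inl rfl)
  · exact this F hF 3 (Or.inr rfl)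

variable (A B C) in
/-- The key class: `f` is smooth, all d-derivative words of length `m-1` applied to `f`
lie in the span `V1`, and all those of length `m` are constant. -/
def Kc (m : ℕ) (f : Fn) : Prop :=
  Sm f ∧ (∀ w : List Bool, w.length + 1 = m → V1 A B C (dApply w f)) ∧
    (∀ w : List Bool, w.length = m → ∃ c : ℝ, ∀ x, dApply w f x = c)

lemma Kc.sm {m : ℕ} {f : Fn} (h : Kc A B C m f) : Sm f := h.1

lemma Kc.zero_above {m : ℕ} {f : Fn} (h : Kc A B C m f) :
    ∀ w : List Bool, m < w.length → dApply w f = fun _ => 0 :=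
  _root_.zero_above h.1 h.2.2

lemma Kc.of_eq {m : ℕ} {f g : Fn} (h : Kc A B C m f) (he : ∀ x, f x = g x) :
    Kc A B C m g := by
  have : f = g := funext he
  exact this ▸ h

lemma Kc.zero_fun (m : ℕ) : Kc A B C m (fun _ => 0) := by
  refine ⟨contDiff_const, fun w _ => ?_, fun w _ => ⟨0, fun x => ?_⟩⟩
  · rcases eq_or_ne w [] with rfl | h
    · exact V1_zero
    · rw [dApply_const_of_ne w h]; exact V1_zero
  · rcases eq_or_ne w [] with rfl | h
    · rfl
    · rw [dApply_const_of_ne w h]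

lemma Kc.dStep {m : ℕ} {f : Fn} (h : Kc A B C (m + 1) f) (b : Bool) :
    Kc A B C m (dOp b f) := by
  have key : ∀ w : List Bool, dApply w (dOp b f) = dApply (w ++ [b]) f := by
    intro w; rw [dApply_append]; rfl
  refine ⟨h.sm.dOp b, fun w hw => ?_, fun w hw => ?_⟩
  · rw [key]
    exact h.2.1 (w ++ [b]) (by simp [hw])
  · rw [key]
    exact h.2.2 (w ++ [b]) (by simp [hw])

lemma Kc.add {m : ℕ} {f g : Fn} (hf : Kc A B C m f) (hg : Kc A B C m g) :
    Kc A B C m (fun x => f x + g x) := by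
  refine ⟨hf.sm.add hg.sm, fun w hw => ?_, fun w hw => ?_⟩
  · rw [dApply_add hf.sm hg.sm]
    exact V1_add (hf.2.1 w hw) (hg.2.1 w hw)
  · rw [dApply_add hf.sm hg.sm]
    obtain ⟨c, hc⟩ := hf.2.2 w hw
    obtain ⟨d, hd⟩ := hg.2.2 w hw
    exact ⟨c + d, fun x => by simp only [hc x, hd x]⟩

lemma Kc.const_mul {m : ℕ} {f : Fn} (c : ℝ) (hf : Kc A B C m f) :
    Kc A B C m (fun x => c * f x) := by
  refine ⟨contDiff_const.mul hf.sm, fun w hw => ?_, fun w hw => ?_⟩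
  · rw [dApply_const_mul hf.sm]
    exact V1_const_mul c (hf.2.1 w hw)
  · rw [dApply_const_mul hf.sm]
    obtain ⟨d, hd⟩ := hf.2.2 w hw
    exact ⟨c * d, fun x => by simp only [hd x]⟩

end ABC

section ABC2

variable {A B C : Fn}

lemma Kc.const_fun {f : Fn} (h : Kc A B C 0 f) : ∃ c : ℝ, f = fun _ => c := by
  obtain ⟨c, hc⟩ := h.2.2 [] rfl
  exact ⟨c, funext hc⟩

lemma Kc.const_kc (c : ℝ) : Kc A B C 0 (fun _ => c) := by
  refine ⟨contDiff_const, fun w hw => by omega, fun w hw => ?_⟩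
  have : w = [] := List.length_eq_zero_iff.mp hw
  subst this
  exact ⟨c, fun _ => rfl⟩

lemma dOp_mul {f g : Fn} (hf : Sm f) (hg : Sm g) (b : Bool) :
    dOp b (fun x => f x * g x) = fun x => dOp b f x * g x + f x * dOp b g x :=
  pd_mul hf hg _

/-- product of elements of `Kc a` and `Kc b` lies in `Kc (a+b)`. -/
lemma Kc.mul : ∀ n a b : ℕ, a + b = n → ∀ {f g : Fn}, Kc A B C a f → Kc A B C b g →
    Kc A B C n (fun x => f x * g x) := by
  intro n
  induction n with
  | zero =>
    intro a b hab f g hf hg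
    have ha : a = 0 := by omega
    have hb : b = 0 := by omega
    subst ha; subst hb
    obtain ⟨c, rfl⟩ := hf.const_fun
    obtain ⟨d, rfl⟩ := hg.const_fun
    exact (Kc.const_kc (c * d)).of_eq (fun x => rfl)
  | succ n ih =>
    intro a b hab f g hf hg
    match a, b with
    | 0, b =>
      obtain rfl : b = n + 1 := by omega
      obtain ⟨c, rfl⟩ := hf.const_fun
      exact (hg.const_mul c).of_eq (fun x => rfl)
    | a + 1, 0 =>
      obtain rfl : a = n := by omega
      obtain ⟨d, rfl⟩ := hg.const_fun
      exact Kc.of_eq (hf.const_mul d) (fun x => mul_comm d (f x))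
    | a + 1, b + 1 =>
      have hfg : Sm (fun x => f x * g x) := hf.sm.mul hg.sm
      have split : ∀ (w' : List Bool) (s : Bool), dApply (w' ++ [s]) (fun x => f x * g x)
          = fun x => dApply w' (fun y => dOp s f y * g y) x
              + dApply w' (fun y => f y * dOp s g y) x := by
        intro w' s
        rw [dApply_append]
        have e1 : dApply [s] (fun x => f x * g x) = dOp s (fun x => f x * g x) := rfl
        rw [e1, dOp_mul hf.sm hg.sm]
        exact dApply_add ((hf.sm.dOp s).mul hg.sm) (hf.sm.mul (hg.sm.dOp s)) w'
      have h1 : ∀ s : Bool, Kc A B C n (fun y => dOp s f y * g y) := fun s =>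
        ih a (b+1) (by omega) (hf.dStep s) hg
      have h2 : ∀ s : Bool, Kc A B C n (fun y => f y * dOp s g y) := fun s =>
        ih (a+1) b (by omega) hf (hg.dStep s)
      refine ⟨hfg, fun w hw => ?_, fun w hw => ?_⟩
      · rcases w.eq_nil_or_concat with rfl | ⟨w', s, rfl⟩
        · simp only [List.length_nil] at hw; omega
        · simp only [List.concat_eq_append] at hw ⊢
          rw [split w' s]
          have hl : w'.length + 1 = n := by simpa using hw
          exact V1_add ((h1 s).2.1 w' hl) ((h2 s).2.1 w' hl)
      · rcases w.eq_nil_or_concat with rfl | ⟨w', s, rfl⟩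
        · simp only [List.length_nil] at hw; omega
        · simp only [List.concat_eq_append] at hw ⊢
          rw [split w' s]
          have hl : w'.length = n := by simpa using hw
          obtain ⟨c, hc⟩ := (h1 s).2.2 w' hl
          obtain ⟨d, hd⟩ := (h2 s).2.2 w' hl
          exact ⟨c + d, fun x => by simp only [hc x, hd x]⟩

/-- `pd i` raises the level by one (valid for every direction `i`). -/
lemma Kc.pd_raise {m : ℕ} {f : Fn} (h : Kc A B C m f) (i : Fin 4) :
    Kc A B C (m + 1) (pd i f) := by
  refine ⟨h.sm.pd i, fun w hw => ?_, fun w hw => ?_⟩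
  · rw [dApply_pd h.sm i w]
    obtain ⟨c, hc⟩ := h.2.2 w (by omega)
    rw [funext hc, pd_const]
    exact V1_zero
  · rw [dApply_pd h.sm i w]
    rw [h.zero_above w (by omega), pd_const]
    exact ⟨0, fun _ => rfl⟩

end ABC2

section raise

variable {A B C : Fn}

lemma Dp_const (c : ℝ) : Dp A C (fun _ => c) = fun _ => 0 := by
  funext x
  simp only [Dp, pu, pv, pV, pd_const]
  ring

lemma delta_const (c : ℝ) : delta B C (fun _ => c) = fun _ => 0 := by
  funext x
  simp only [delta, pU, pv, pV, pd_const]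
  ring

lemma Kc.Dp_raise {m : ℕ} {f : Fn} (KA : Kc A B C 2 A) (KC : Kc A B C 2 C)
    (h : Kc A B C (m + 1) f) : Kc A B C (m + 2) (Dp A C f) := by
  have t1 : Kc A B C (m + 2) (pd 0 f) := h.pd_raise 0
  have t2 : Kc A B C (m + 2) (fun x => A x * pd 1 f x) :=
    Kc.mul (m + 2) 2 m (by omega) KA (h.dStep false)
  have t3 : Kc A B C (m + 2) (fun x => (1/2 * C x) * pd 3 f x) :=
    Kc.mul (m + 2) 2 m (by omega) (KC.const_mul (1/2)) (h.dStep true)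
  have := (t1.add (t2.const_mul (-1))).add (t3.const_mul (-1))
  exact this.of_eq (fun x => by simp only [Dp, pu, pv, pV]; ring)

lemma Kc.delta_raise {m : ℕ} {f : Fn} (KB : Kc A B C 2 B) (KC : Kc A B C 2 C)
    (h : Kc A B C (m + 1) f) : Kc A B C (m + 2) (delta B C f) := by
  have t1 : Kc A B C (m + 2) (pd 2 f) := h.pd_raise 2
  have t2 : Kc A B C (m + 2) (fun x => B x * pd 3 f x) :=
    Kc.mul (m + 2) 2 m (by omega) KB (h.dStep true)
  have t3 : Kc A B C (m + 2) (fun x => (1/2 * C x) * pd 1 f x) :=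
    Kc.mul (m + 2) 2 m (by omega) (KC.const_mul (1/2)) (h.dStep false)
  have := ((t1.const_mul (-1)).add t2).add t3
  exact this.of_eq (fun x => by simp only [delta, pU, pv, pV]; ring)

end raise

section metric

variable {A B C : Fn}

lemma V1_of_eq {g h : Fn} (hg : V1 A B C g) (he : ∀ x, g x = h x) : V1 A B C h := by
  have : g = h := funext he
  exact this ▸ hg

/-- each metric function lies in `Kc 2`. -/
lemma K_metric {F : Fn} (hF : F = A ∨ F = B ∨ F = C) (hFsm : Sm F)
    (h2F : ∀ i j : ℕ, i + j = 2 → ∃ c : ℝ, ∀ x, (pv^[i] (pV^[j] F)) x = c) :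
    Kc A B C 2 F := by
  refine ⟨hFsm, fun w hw => ?_, fun w hw => ?_⟩
  · -- length-one words: basis elements
    rcases w with _ | ⟨b, _ | ⟨b2, w⟩⟩
    · simp at hw
    · exact V1_of_eq (V1_of_const_mul_basis 1 b F hF) (fun x => one_mul _)
    · simp at hw
  · -- length-two words: constant by hypothesis
    rcases w with _ | ⟨b1, _ | ⟨b2, _ | ⟨b3, w⟩⟩⟩ <;> simp at hw
    have e1 : dApply [b1, b2] F = dOp b1 (dOp b2 F) := rfl
    cases b1 <;> cases b2
    · -- pv pv
      obtain ⟨c, hc⟩ := h2F 2 0 rfl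
      exact ⟨c, fun x => hc x⟩
    · -- pv pV  (w = [false, true] : outer pv, inner pV)
      obtain ⟨c, hc⟩ := h2F 1 1 rfl
      exact ⟨c, fun x => hc x⟩
    · -- pV pv : commute
      obtain ⟨c, hc⟩ := h2F 1 1 rfl
      refine ⟨c, fun x => ?_⟩
      have hcomm : pd 3 (pd 1 F) = pd 1 (pd 3 F) := pd_comm hFsm 3 1
      show pd 3 (pd 1 F) x = c
      rw [hcomm]
      exact hc x
    · -- pV pV
      obtain ⟨c, hc⟩ := h2F 0 2 rfl
      exact ⟨c, fun x => hc x⟩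

end metric

section xi

variable {A B C : Fn}

/-- the eight spin coefficients lie in `Kc 1`. -/
lemma K_xi {ξ : Fn} (KA : Kc A B C 2 A) (KB : Kc A B C 2 B) (KC : Kc A B C 2 C)
    (hξ : ξ = sigma B ∨ ξ = tau C ∨ ξ = kappa' A ∨ ξ = rho' C ∨
          ξ = eps' A C ∨ ξ = teps' A C ∨ ξ = talpha B C ∨ ξ = alpha' B C) :
    Kc A B C 1 ξ := by
  have gA1 : Kc A B C 1 (pd 1 A) := KA.dStep false
  have gA3 : Kc A B C 1 (pd 3 A) := KA.dStep true
  have gB1 : Kc A B C 1 (pd 1 B) := KB.dStep false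
  have gB3 : Kc A B C 1 (pd 3 B) := KB.dStep true
  have gC1 : Kc A B C 1 (pd 1 C) := KC.dStep false
  have gC3 : Kc A B C 1 (pd 3 C) := KC.dStep true
  rcases hξ with rfl | rfl | rfl | rfl | rfl | rfl | rfl | rfl
  · exact (gB1.const_mul (-1)).of_eq (fun x => by simp [sigma, pv])
  · exact (gC1.const_mul (1/2)).of_eq (fun x => by simp only [tau, pv])
  · exact (gA3.const_mul (-1)).of_eq (fun x => by simp [kappa', pV])
  · exact (gC3.const_mul (-(1/2))).of_eq (fun x => by simp only [rho', pV])
  · exact ((gC3.const_mul (1/4)).add (gA1.const_mul (-(1/2)))).of_eq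
      (fun x => by simp only [eps', pv, pV]; ring)
  · exact ((gC3.const_mul (-(1/4))).add (gA1.const_mul (-(1/2)))).of_eq
      (fun x => by simp only [teps', pv, pV]; ring)
  · exact ((gB3.const_mul (-(1/2))).add (gC1.const_mul (-(1/4)))).of_eq
      (fun x => by simp only [talpha, pv, pV]; ring)
  · exact ((gB3.const_mul (1/2)).add (gC1.const_mul (-(1/4)))).of_eq
      (fun x => by simp only [alpha', pv, pV]; ring)

end xi

section master

variable {A B C ξ : Fn}

lemma pv_eq_dOp : pv = dOp false := rfl
lemma pV_eq_dOp : pV = dOp true := rfl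

lemma master (KA : Kc A B C 2 A) (KB : Kc A B C 2 B) (KC : Kc A B C 2 C)
    (Kξ : Kc A B C 1 ξ) :
    ∀ L : List (Fin 4),
      (∀ m : ℕ, L.count 0 + L.count 1 + m = L.count 2 + L.count 3 + 1 →
        Kc A B C m (applyOps A B C L ξ)) ∧
      (L.count 2 + L.count 3 + 1 ≤ L.count 0 + L.count 1 →
        ∃ c : ℝ, applyOps A B C L ξ = fun _ => c) := by
  intro L
  induction L with
  | nil =>
    constructor
    · intro m hm
      obtain rfl : m = 1 := by simpa using hm
      exact Kξ
    · intro h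
      simp at h
  | cons t L ih =>
    have hcons : ∀ t : Fin 4, applyOps A B C (t :: L) ξ = opOf A B C t (applyOps A B C L ξ) :=
      fun _ => rfl
    have ht : t = 0 ∨ t = 1 ∨ t = 2 ∨ t = 3 := by fin_cases t <;> simp
    rcases ht with rfl | rfl | rfl | rfl
    · -- t = 0 : pv
      have hc0 : (((0:Fin 4) :: L).count 0 : ℕ) = L.count 0 + 1 := by simp
      have hc1 : (((0:Fin 4) :: L).count 1 : ℕ) = L.count 1 := by simp
      have hc2 : (((0:Fin 4) :: L).count 2 : ℕ) = L.count 2 := by simp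
      have hc3 : (((0:Fin 4) :: L).count 3 : ℕ) = L.count 3 := by simp
      rw [hcons _, hc0, hc1, hc2, hc3]
      have hop : opOf A B C 0 = pv := rfl
      rw [hop, pv_eq_dOp]
      constructor
      · intro m hm
        exact (ih.1 (m + 1) (by omega)).dStep false
      · intro hle
        rcases le_or_gt (L.count 2 + L.count 3 + 1) (L.count 0 + L.count 1) with h | h
        · obtain ⟨c, hc⟩ := ih.2 h
          exact ⟨0, by rw [hc]; exact dOp_const false c⟩
        · have h1 := ih.1 1 (by omega)
          obtain ⟨c, hc⟩ := h1.2.2 [false] rfl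
          exact ⟨c, funext hc⟩
    · -- t = 1 : pV
      have hc0 : (((1:Fin 4) :: L).count 0 : ℕ) = L.count 0 := by simp
      have hc1 : (((1:Fin 4) :: L).count 1 : ℕ) = L.count 1 + 1 := by simp
      have hc2 : (((1:Fin 4) :: L).count 2 : ℕ) = L.count 2 := by simp
      have hc3 : (((1:Fin 4) :: L).count 3 : ℕ) = L.count 3 := by simp
      rw [hcons _, hc0, hc1, hc2, hc3]
      have hop : opOf A B C 1 = pV := rfl
      rw [hop, pV_eq_dOp]
      constructor
      · intro m hm
        exact (ih.1 (m + 1) (by omega)).dStep true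
      · intro hle
        rcases le_or_gt (L.count 2 + L.count 3 + 1) (L.count 0 + L.count 1) with h | h
        · obtain ⟨c, hc⟩ := ih.2 h
          exact ⟨0, by rw [hc]; exact dOp_const true c⟩
        · have h1 := ih.1 1 (by omega)
          obtain ⟨c, hc⟩ := h1.2.2 [true] rfl
          exact ⟨c, funext hc⟩
    · -- t = 2 : Dp
      have hc0 : (((2:Fin 4) :: L).count 0 : ℕ) = L.count 0 := by simp
      have hc1 : (((2:Fin 4) :: L).count 1 : ℕ) = L.count 1 := by simp
      have hc2 : (((2:Fin 4) :: L).count 2 : ℕ) = L.count 2 + 1 := by simp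
      have hc3 : (((2:Fin 4) :: L).count 3 : ℕ) = L.count 3 := by simp
      rw [hcons _, hc0, hc1, hc2, hc3]
      have hop : opOf A B C 2 = Dp A C := rfl
      rw [hop]
      constructor
      · intro m hm
        rcases le_or_gt (L.count 0 + L.count 1) (L.count 2 + L.count 3) with h | h
        · obtain ⟨m', rfl⟩ : ∃ m', m = m' + 2 := ⟨m - 2, by omega⟩
          exact Kc.Dp_raise KA KC (ih.1 (m' + 1) (by omega))
        · obtain ⟨c, hc⟩ := ih.2 (by omega)
          rw [hc, Dp_const]
          exact Kc.zero_fun m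
      · intro hle
        obtain ⟨c, hc⟩ := ih.2 (by omega)
        exact ⟨0, by rw [hc, Dp_const]⟩
    · -- t = 3 : delta
      have hc0 : (((3:Fin 4) :: L).count 0 : ℕ) = L.count 0 := by simp
      have hc1 : (((3:Fin 4) :: L).count 1 : ℕ) = L.count 1 := by simp
      have hc2 : (((3:Fin 4) :: L).count 2 : ℕ) = L.count 2 := by simp
      have hc3 : (((3:Fin 4) :: L).count 3 : ℕ) = L.count 3 + 1 := by simp
      rw [hcons _, hc0, hc1, hc2, hc3]
      have hop : opOf A B C 3 = delta B C := rfl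
      rw [hop]
      constructor
      · intro m hm
        rcases le_or_gt (L.count 0 + L.count 1) (L.count 2 + L.count 3) with h | h
        · obtain ⟨m', rfl⟩ : ∃ m', m = m' + 2 := ⟨m - 2, by omega⟩
          exact Kc.delta_raise KB KC (ih.1 (m' + 1) (by omega))
        · obtain ⟨c, hc⟩ := ih.2 (by omega)
          rw [hc, delta_const]
          exact Kc.zero_fun m
      · intro hle
        obtain ⟨c, hc⟩ := ih.2 (by omega)
        exact ⟨0, by rw [hc, delta_const]⟩

end master

/-- for Walker metrics with constant second (v,V)-derivatives of A, B, C,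
any composition of n−1 operators from {∂_v, ∂_V} and n−1 operators from {D', δ}
applied to a boost-weight-difference-one spin coefficient ξ is a constant-coefficient
linear combination of the eight spin coefficients σ, τ, κ', ρ', ε', ε̃', α̃, α'. -/
theorem stmt10 (A B C : Fn)
    (hA : ContDiff ℝ (⊤ : ℕ∞) A) (hB : ContDiff ℝ (⊤ : ℕ∞) B) (hC : ContDiff ℝ (⊤ : ℕ∞) C)
    (h2A : ∀ i j : ℕ, i + j = 2 → ∃ c : ℝ, ∀ x, (pv^[i] (pV^[j] A)) x = c)
    (h2B : ∀ i j : ℕ, i + j = 2 → ∃ c : ℝ, ∀ x, (pv^[i] (pV^[j] B)) x = c)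
    (h2C : ∀ i j : ℕ, i + j = 2 → ∃ c : ℝ, ∀ x, (pv^[i] (pV^[j] C)) x = c)
    (ξ : Fn)
    (hξ : ξ = sigma B ∨ ξ = tau C ∨ ξ = kappa' A ∨ ξ = rho' C ∨
          ξ = eps' A C ∨ ξ = teps' A C ∨ ξ = talpha B C ∨ ξ = alpha' B C)
    (n : ℕ) (hn : 1 ≤ n) :
    ∀ L : List (Fin 4),
      L.count 0 + L.count 1 = n - 1 →
      L.count 2 + L.count 3 = n - 1 →
      ∃ c₁ c₂ c₃ c₄ c₅ c₆ c₇ c₈ : ℝ, ∀ x,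
        applyOps A B C L ξ x =
          c₁ * sigma B x + c₂ * tau C x + c₃ * kappa' A x + c₄ * rho' C x
            + c₅ * eps' A C x + c₆ * teps' A C x + c₇ * talpha B C x
            + c₈ * alpha' B C x := by
  intro L h01 h23
  have KA : Kc A B C 2 A := K_metric (Or.inl rfl) hA h2A
  have KB : Kc A B C 2 B := K_metric (Or.inr (Or.inl rfl)) hB h2B
  have KC : Kc A B C 2 C := K_metric (Or.inr (Or.inr rfl)) hC h2C
  have Kξ : Kc A B C 1 ξ := K_xi KA KB KC hξ
  have h1 : Kc A B C 1 (applyOps A B C L ξ) :=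
    (master KA KB KC Kξ L).1 1 (by omega)
  obtain ⟨a1, a2, a3, a4, a5, a6, hrep⟩ := h1.2.1 [] rfl
  refine ⟨-a3, 2 * a5, -a2, -(2 * a6), -a1, -a1, -a4, a4, fun x => ?_⟩
  have := hrep x
  rw [show dApply [] (applyOps A B C L ξ) = applyOps A B C L ξ from rfl] at this
  rw [this]
  simp only [sigma, tau, kappa', rho', eps', teps', talpha, alpha', pv, pV]
  ring
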